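/- arXiv:2006.01031 — 7 statements merged into one kernel-verified Lean document; each statement's English description precedes it below -/
import Mathlib

section
/- There exists a map g from EuclideanSpace ℝ (Fin 4) to the real 4×4 matrices (Matrix (Fin 4) (Fin 4) ℝ) such that: (i) g is infinitely differentiable (ContDiff ℝ ⊤); (ii) g(-q) = g(q) for every q; and (iii) for every q with ‖q‖ = 1, the matrix g(q) is symmetric, x ⬝ᵥ (g(q)).mulVec x ≥ 0 for every x, the set of unit vectors x attaining the minimum of x ⬝ᵥ (g(q)).mulVec x over the unit sphere is exactly {q, -q}, and the null space {x | (g(q)).mulVec x = 0} equals the ℝ-span of q (so the minimal eigenvalue 0 of g(q) is simple). (Identifying each rotation in SO(3) with an antipodal pair ±q of unit quaternions, this is the smooth global section of the map sending a symmetric 4×4 matrix with simple minimal eigenvalue to the antipodal pair of unit-norm minimizers of its quadratic form.) -/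
open Matrix
open scoped RealInnerProductSpace

attribute [local instance] Matrix.normedAddCommGroup Matrix.normedSpace

noncomputable def gmat (q : EuclideanSpace ℝ (Fin 4)) : Matrix (Fin 4) (Fin 4) ℝ :=
  Matrix.of fun i j => (∑ k, q k * q k) * (if i = j then 1 else 0) - q i * q j

lemma gmat_contDiff : ContDiff ℝ (⊤ : ℕ∞) gmat := by
  refine contDiff_pi.2 ?_
  intro i
  rw [contDiff_pi]
  intro j
  have hcoord : ∀ k : Fin 4, ContDiff ℝ (⊤ : ℕ∞) (fun q : EuclideanSpace ℝ (Fin 4) => q k) :=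
    fun k => (EuclideanSpace.proj k : EuclideanSpace ℝ (Fin 4) →L[ℝ] ℝ).contDiff
  exact ((ContDiff.sum fun k _ => (hcoord k).mul (hcoord k)).mul contDiff_const).sub
    ((hcoord i).mul (hcoord j))

lemma gmat_mulVec (q x : EuclideanSpace ℝ (Fin 4)) :
    (gmat q).mulVec x = fun i => ⟪q,q⟫ * x i - ⟪q,x⟫ * q i := by
  funext i
  simp only [gmat, mulVec, dotProduct, Matrix.of_apply, PiLp.inner_apply, RCLike.inner_apply,
    starRingEnd_apply, star_trivial, sub_mul, Finset.sum_sub_distrib]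
  congr 1
  · simp [mul_ite, Finset.sum_ite_eq, Finset.mul_sum, mul_comm]
  · rw [Finset.sum_mul]
    congr 1; funext k; ring

private lemma sum_mul_left (c : ℝ) (f g : Fin 4 → ℝ) :
    ∑ i, f i * (c * g i) = c * ∑ i, g i * f i := by
  rw [Finset.mul_sum]; congr 1; funext k; ring

lemma gmat_quad (q x : EuclideanSpace ℝ (Fin 4)) :
    x ⬝ᵥ (gmat q).mulVec x = ⟪q,q⟫ * ⟪x,x⟫ - ⟪q,x⟫ * ⟪q,x⟫ := by
  rw [gmat_mulVec]
  simp only [dotProduct, mul_sub, Finset.sum_sub_distrib]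
  rw [sum_mul_left, sum_mul_left]
  congr 1
  simp [PiLp.inner_apply, mul_comm]

/-- Theorem 1 of the paper: there is a smooth global section
`g : SO(3) ≅ {±q : ‖q‖ = 1} → S⁴_λ` of the map sending a symmetric 4×4 matrix with
simple minimal eigenvalue to the antipodal pair of unit-norm minimizers of its
quadratic form. -/
theorem smooth_global_section :
    ∃ g : EuclideanSpace ℝ (Fin 4) → Matrix (Fin 4) (Fin 4) ℝ,
      ContDiff ℝ (⊤ : ℕ∞) g ∧
      (∀ q : EuclideanSpace ℝ (Fin 4), g (-q) = g q) ∧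
      (∀ q : EuclideanSpace ℝ (Fin 4), ‖q‖ = 1 →
        (g q)ᵀ = g q ∧
        (∀ x : EuclideanSpace ℝ (Fin 4), 0 ≤ x ⬝ᵥ (g q).mulVec x) ∧
        {x : EuclideanSpace ℝ (Fin 4) | ‖x‖ = 1 ∧
            ∀ y : EuclideanSpace ℝ (Fin 4), ‖y‖ = 1 →
              x ⬝ᵥ (g q).mulVec x ≤ y ⬝ᵥ (g q).mulVec y} = {q, -q} ∧
        {x : EuclideanSpace ℝ (Fin 4) | (g q).mulVec x = 0} =
          (Submodule.span ℝ {q} : Set (EuclideanSpace ℝ (Fin 4)))) := by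
  refine ⟨gmat, gmat_contDiff, ?_, ?_⟩
  · intro q
    unfold gmat
    funext i j
    simp [mul_mul_mul_comm]
  · intro q hq
    have hqq : ⟪q,q⟫ = (1 : ℝ) := by
      rw [real_inner_self_eq_norm_sq, hq]; norm_num
    have hnn : ∀ x : EuclideanSpace ℝ (Fin 4), 0 ≤ x ⬝ᵥ (gmat q).mulVec x := by
      intro x
      rw [gmat_quad]
      have := real_inner_mul_inner_self_le q x
      linarith
    have hval : ∀ x : EuclideanSpace ℝ (Fin 4),
        x ⬝ᵥ (gmat q).mulVec x = ⟪x,x⟫ - ⟪q,x⟫ * ⟪q,x⟫ := by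
      intro x; rw [gmat_quad, hqq, one_mul]
    refine ⟨?_, hnn, ?_, ?_⟩
    · unfold gmat
      funext i j
      simp only [transpose_apply, Matrix.of_apply]
      have h1 : (if j = i then (1:ℝ) else 0) = (if i = j then 1 else 0) := by
        rcases eq_or_ne i j with h | h
        · simp [h]
        · simp [h, h.symm]
      rw [h1, mul_comm (q j) (q i)]
    · ext x
      simp only [Set.mem_setOf_eq, Set.mem_insert_iff, Set.mem_singleton_iff]
      constructor
      · rintro ⟨hx, hmin⟩
        have h0 : x ⬝ᵥ (gmat q).mulVec x ≤ 0 := by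
          have := hmin q hq
          rw [hval q, hqq] at this
          linarith
        have hxx : ⟪x,x⟫ = (1:ℝ) := by
          rw [real_inner_self_eq_norm_sq, hx]; norm_num
        have h1 : ⟪q,x⟫ * ⟪q,x⟫ = 1 := by
          have h2 := hval x
          nlinarith [hnn x]
        rcases mul_self_eq_one_iff.mp h1 with h | h
        · left; exact ((inner_eq_one_iff_of_norm_eq_one hq hx).mp h).symm
        · right
          have hnx : ‖-x‖ = 1 := by simpa using hx
          have h3 : ⟪q, -x⟫ = (1:ℝ) := by rw [inner_neg_right, h]; ring
          have h4 := (inner_eq_one_iff_of_norm_eq_one hq hnx).mp h3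
          rw [h4, neg_neg]
      · rintro (h | h)
        · subst h
          refine ⟨hq, fun y hy => ?_⟩
          rw [hval x, hqq]
          simpa using hnn y
        · subst h
          refine ⟨by simpa using hq, fun y hy => ?_⟩
          rw [hval (-q)]
          simp only [inner_neg_right, inner_neg_left, inner_neg_neg, hqq]
          have := hnn y
          linarith
    · ext x
      simp only [Set.mem_setOf_eq, SetLike.mem_coe, Submodule.mem_span_singleton]
      constructor
      · intro hx0
        rw [gmat_mulVec] at hx0
        refine ⟨⟪q,x⟫, ?_⟩
        ext i
        have hi : ⟪q,q⟫ * x i - ⟪q,x⟫ * q i = 0 := by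
          have := congrFun hx0 i
          simpa using this
        rw [hqq, one_mul] at hi
        show ⟪q,x⟫ * q i = x i
        linarith
      · rintro ⟨c, rfl⟩
        rw [gmat_mulVec]
        funext i
        have hqc : ⟪q, c • q⟫ = c := by
          rw [real_inner_smul_right, hqq, mul_one]
        rw [hqq, hqc]
        show 1 * (c • q) i - c * q i = 0
        simp [PiLp.smul_apply, smul_eq_mul]
end

section
/- Let N : ℕ, let u v : Fin N → ℍ be families of pure quaternions (so (u i).re = 0 and (v i).re = 0 for all i), let σ : Fin N → ℝ with σ i > 0 for all i, and let q ∈ ℍ be a unit quaternion. Then ∑ i, (σ i)⁻² * ‖v i - q * u i * q⁻¹‖² = ∑ i, (σ i)⁻² * (‖u i‖² + ‖v i‖² + 2 * ⟪q, (v i) * q * (u i)⟫). That is, the Wahba objective is a quadratic form in q, with data matrix ∑ᵢ σᵢ⁻²((‖uᵢ‖² + ‖vᵢ‖²)I + 2 Q_ℓ(v̂ᵢ) Q_r(ûᵢ)). -/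
open scoped Quaternion RealInnerProductSpace

lemma wahba_key (u v q : ℍ[ℝ]) (hu : u.re = 0) (hv : v.re = 0) (hq : ‖q‖ = 1) :
    ‖v - q * u * q⁻¹‖ ^ 2 = ‖u‖ ^ 2 + ‖v‖ ^ 2 + 2 * ⟪q, v * q * u⟫ := by
  have hq0 : q ≠ 0 := by intro h; simp [h] at hq
  have hinv : q⁻¹ = star q := by
    have hn : Quaternion.normSq q = 1 := by
      rw [Quaternion.normSq_eq_norm_mul_self, hq, one_mul]
    refine inv_eq_of_mul_eq_one_right ?_
    rw [Quaternion.self_mul_star, hn]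
    norm_cast
  have hsu : star u = -u := Quaternion.star_eq_neg.mpr hu
  have hsv : star v = -v := Quaternion.star_eq_neg.mpr hv
  rw [hinv, @norm_sub_sq_real ℍ[ℝ]]
  have h1 : ‖q * u * star q‖ = ‖u‖ := by
    simp [norm_mul, Quaternion.norm_star, hq]
  rw [h1]
  have hre : ∀ a b : ℍ[ℝ], (a * b).re = (b * a).re := by
    intro a b; simp [Quaternion.re_mul]; ring
  have h2 : ⟪v, q * u * star q⟫ = -⟪q, v * q * u⟫ := by
    simp only [Quaternion.inner_def, star_mul, star_star, hsu, hsv, mul_neg, neg_mul,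
      Quaternion.re_neg, neg_neg, mul_assoc]
    rw [show q * (u * (star q * v)) = (q * (u * star q)) * v by rw [mul_assoc, mul_assoc],
      hre (q * (u * star q)) v]
  rw [h2]
  ring

open Finset in
/-- Conversion of the Wahba problem with unit quaternions (Problem 1 of the paper)
into a quadratically-constrained quadratic program (Problem 2): for pure
quaternions `u i`, `v i` and a unit quaternion `q`, the Wahba objective is a
quadratic form in `q`. -/
theorem wahba_objective_as_quadratic_form (N : ℕ) (u v : Fin N → ℍ[ℝ])
    (hu : ∀ i, (u i).re = 0) (hv : ∀ i, (v i).re = 0)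
    (σ : Fin N → ℝ) (hσ : ∀ i, 0 < σ i) (q : ℍ[ℝ]) (hq : ‖q‖ = 1) :
    ∑ i, (σ i ^ 2)⁻¹ * ‖v i - q * u i * q⁻¹‖ ^ 2 =
      ∑ i, (σ i ^ 2)⁻¹ * (‖u i‖ ^ 2 + ‖v i‖ ^ 2 + 2 * ⟪q, v i * q * u i⟫) := by
  refine Finset.sum_congr rfl fun i _ => ?_
  rw [wahba_key (u i) (v i) q (hu i) (hv i) hq]
end

section
/- Let A₀ be a symmetric real 4×4 matrix, λ₀ ∈ ℝ, and q₀ ∈ EuclideanSpace ℝ (Fin 4) with ‖q₀‖ = 1, A₀.mulVec q₀ = λ₀ • q₀, and suppose every x with A₀.mulVec x = λ₀ • x is a scalar multiple of q₀ (λ₀ is a simple eigenvalue). Then for every symmetric real 4×4 matrix H there exist ε > 0 and functions λ : ℝ → ℝ and q : ℝ → EuclideanSpace ℝ (Fin 4), each infinitely differentiable on the interval (-ε, ε), such that λ 0 = λ₀, q 0 = q₀, and for every t ∈ (-ε, ε): (A₀ + t • H).mulVec (q t) = (λ t) • (q t) and ‖q t‖ = 1. Moreover, the derivative of λ at 0 equals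 ⟪q₀, H.mulVec q₀⟫, and the derivative w of q at 0 satisfies ⟪w, q₀⟫ = 0 and (λ₀ • 1 - A₀).mulVec w = H.mulVec q₀ - ⟪q₀, H.mulVec q₀⟫ • q₀ (equivalently, w = (λ₀I - A₀)† H q₀, the analytic gradient of the QCQP solution with respect to the data matrix). -/
set_option maxHeartbeats 1000000


open Matrix
open scoped RealInnerProductSpace

abbrev E4 : Type := EuclideanSpace ℝ (Fin 4)
abbrev G4 : Type := ℝ × ℝ × E4

noncomputable def mvCLM (A : Matrix (Fin 4) (Fin 4) ℝ) : E4 →L[ℝ] E4 :=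
  LinearMap.toContinuousLinearMap
    { toFun := fun x => WithLp.toLp 2 (A.mulVec x)
      map_add' := fun x y => congrArg (WithLp.toLp 2) (A.mulVec_add x y)
      map_smul' := fun c x => congrArg (WithLp.toLp 2) (A.mulVec_smul c x) }

@[simp] lemma mvCLM_apply (A : Matrix (Fin 4) (Fin 4) ℝ) (x : E4) :
    mvCLM A x = WithLp.toLp 2 (A.mulVec x) := rfl

lemma inner_eq_dot (x y : E4) : ⟪x, y⟫ = x ⬝ᵥ y := by
  simp [PiLp.inner_apply, dotProduct]
  exact Finset.sum_congr rfl fun i _ => mul_comm _ _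

lemma inner_mvCLM_sym {A : Matrix (Fin 4) (Fin 4) ℝ} (hA : Aᵀ = A) (x y : E4) :
    ⟪x, mvCLM A y⟫ = ⟪mvCLM A x, y⟫ := by
  rw [inner_eq_dot, inner_eq_dot]
  show x ⬝ᵥ A *ᵥ y = (A *ᵥ x) ⬝ᵥ y
  rw [Matrix.dotProduct_mulVec, ← Matrix.mulVec_transpose, hA]

noncomputable def Phi (A₀ H : Matrix (Fin 4) (Fin 4) ℝ) : G4 → G4 :=
  fun p => (p.1, ⟪p.2.2, p.2.2⟫,
    mvCLM A₀ p.2.2 + p.1 • mvCLM H p.2.2 - p.2.1 • p.2.2)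

lemma contDiff_Phi (A₀ H : Matrix (Fin 4) (Fin 4) ℝ) : ContDiff ℝ (⊤ : WithTop ℕ∞) (Phi A₀ H) := by
  have hz : ContDiff ℝ (⊤ : WithTop ℕ∞) (fun p : G4 => p.2.2) := contDiff_snd.comp contDiff_snd
  refine contDiff_fst.prodMk (ContDiff.prodMk ?_ ?_)
  · exact hz.inner ℝ hz
  · exact (((mvCLM A₀).contDiff.comp hz).add
      (contDiff_fst.smul ((mvCLM H).contDiff.comp hz))).sub
      ((contDiff_fst.comp contDiff_snd).smul hz)

lemma exists_deriv (A₀ H : Matrix (Fin 4) (Fin 4) ℝ) (l₀ : ℝ) (q₀ : E4) :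
    ∃ D : G4 →L[ℝ] G4, HasStrictFDerivAt (Phi A₀ H) D (0, l₀, q₀) ∧
      ∀ dp : G4, D dp = (dp.1, 2 * ⟪q₀, dp.2.2⟫,
        mvCLM A₀ dp.2.2 + dp.1 • mvCLM H q₀ - (l₀ • dp.2.2 + dp.2.1 • q₀)) := by
  have hz : HasStrictFDerivAt (fun p : G4 => p.2.2)
      ((ContinuousLinearMap.snd ℝ ℝ E4).comp (ContinuousLinearMap.snd ℝ ℝ (ℝ × E4)))
      (0, l₀, q₀) := (hasStrictFDerivAt_snd).comp _ hasStrictFDerivAt_snd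
  have hμ : HasStrictFDerivAt (fun p : G4 => p.2.1)
      ((ContinuousLinearMap.fst ℝ ℝ E4).comp (ContinuousLinearMap.snd ℝ ℝ (ℝ × E4)))
      (0, l₀, q₀) := (hasStrictFDerivAt_fst).comp _ hasStrictFDerivAt_snd
  have h1 : HasStrictFDerivAt (fun p : G4 => p.1)
      (ContinuousLinearMap.fst ℝ ℝ (ℝ × E4)) (0, l₀, q₀) := hasStrictFDerivAt_fst
  have h2 := hz.inner ℝ hz
  have h3 := (((mvCLM A₀).hasStrictFDerivAt.comp ((0 : ℝ), l₀, q₀) hz).add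
      (h1.smul ((mvCLM H).hasStrictFDerivAt.comp ((0 : ℝ), l₀, q₀) hz))).sub (hμ.smul hz)
  have hD := h1.prodMk (h2.prodMk h3)
  refine ⟨_, hD, fun dp => ?_⟩
  simp [fderivInnerCLM_apply, real_inner_comm, two_mul, mvCLM_apply]

/-- Differentiability of the QCQP solution with respect to the data matrix
(via the implicit function theorem): if `l₀` is a simple eigenvalue of the
symmetric matrix `A₀` with unit eigenvector `q₀`, then along any symmetric
perturbation direction `H` there are smooth curves `t ↦ λ t`, `t ↦ q t` of
eigenvalues and unit eigenvectors of `A₀ + t H`, with `λ'(0) = ⟪q₀, H q₀⟫`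
and `q'(0) = (l₀ I - A₀)† H q₀`. -/
theorem qcqp_solution_differentiable (A₀ : Matrix (Fin 4) (Fin 4) ℝ) (hA₀ : A₀ᵀ = A₀)
    (l₀ : ℝ) (q₀ : EuclideanSpace ℝ (Fin 4)) (hq₀ : ‖q₀‖ = 1)
    (heig : A₀.mulVec q₀ = l₀ • q₀)
    (hsimple : ∀ x : EuclideanSpace ℝ (Fin 4), A₀.mulVec x = l₀ • x → ∃ c : ℝ, x = c • q₀) :
    ∀ H : Matrix (Fin 4) (Fin 4) ℝ, Hᵀ = H →
      ∃ (ε : ℝ) (l : ℝ → ℝ) (q : ℝ → EuclideanSpace ℝ (Fin 4)),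
        0 < ε ∧
        ContDiffOn ℝ (⊤ : ℕ∞) l (Set.Ioo (-ε) ε) ∧
        ContDiffOn ℝ (⊤ : ℕ∞) q (Set.Ioo (-ε) ε) ∧
        l 0 = l₀ ∧ q 0 = q₀ ∧
        (∀ t ∈ Set.Ioo (-ε) ε, (A₀ + t • H).mulVec (q t) = l t • q t ∧ ‖q t‖ = 1) ∧
        HasDerivAt l ⟪q₀, ((EuclideanSpace.equiv (Fin 4) ℝ).symm (H.mulVec q₀))⟫ 0 ∧
        ∃ w : EuclideanSpace ℝ (Fin 4),
          HasDerivAt q w 0 ∧ ⟪w, q₀⟫ = 0 ∧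
          (EuclideanSpace.equiv (Fin 4) ℝ).symm ((l₀ • (1 : Matrix (Fin 4) (Fin 4) ℝ) - A₀).mulVec w) =
            ((EuclideanSpace.equiv (Fin 4) ℝ).symm (H.mulVec q₀)) - ⟪q₀, ((EuclideanSpace.equiv (Fin 4) ℝ).symm (H.mulVec q₀))⟫ • q₀ := by
  intro H hH
  have hq1 : ⟪q₀, q₀⟫ = 1 := by
    rw [real_inner_self_eq_norm_sq, hq₀]; norm_num
  have heig' : mvCLM A₀ q₀ = l₀ • q₀ := congrArg (WithLp.toLp 2) heig
  obtain ⟨D, hD, hDapp⟩ := exists_deriv A₀ H l₀ q₀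
  -- injectivity of D
  have hker : ∀ dp : G4, D dp = 0 → dp = 0 := by
    rintro ⟨d1, dμ, dx⟩ h0
    rw [hDapp] at h0
    simp only [Prod.mk_eq_zero] at h0
    obtain ⟨hd1, hd2, hd3⟩ := h0
    subst hd1
    have hdx0 : ⟪q₀, dx⟫ = 0 := by linarith
    simp only [zero_smul, add_zero] at hd3
    have hd3' : mvCLM A₀ dx = l₀ • dx + dμ • q₀ := by
      have := sub_eq_zero.mp hd3; simpa using this
    have hμ0 : dμ = 0 := by
      have h4 := congrArg (fun v => ⟪q₀, v⟫) hd3'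
      simp only [inner_add_right, real_inner_smul_right] at h4
      rw [inner_mvCLM_sym hA₀, heig', real_inner_smul_left, hdx0, hq1] at h4
      simpa [hdx0] using h4.symm
    subst hμ0
    simp only [zero_smul, add_zero] at hd3'
    obtain ⟨cc, hcc⟩ := hsimple dx (congrArg WithLp.ofLp hd3')
    have : cc = 0 := by
      have := hdx0
      rw [hcc, real_inner_smul_right, hq1] at this
      simpa using this
    simp [hcc, this]
  have hinj : Function.Injective D := by
    intro a b hab
    have : D (a - b) = 0 := by rw [map_sub, hab, sub_self]
    have := hker _ this
    exact sub_eq_zero.mp this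
  have hsurj : Function.Surjective D.toLinearMap :=
    LinearMap.injective_iff_surjective.mp hinj
  let e : G4 ≃L[ℝ] G4 :=
    (LinearEquiv.ofBijective D.toLinearMap ⟨hinj, hsurj⟩).toContinuousLinearEquiv
  have hcoe : (e : G4 →L[ℝ] G4) = D := ContinuousLinearMap.ext fun x => rfl
  have hDe : HasStrictFDerivAt (Phi A₀ H) (e : G4 →L[ℝ] G4) (0, l₀, q₀) := by
    rw [hcoe]; exact hD
  have hPhi0 : Phi A₀ H (0, l₀, q₀) = ((0 : ℝ), (1 : ℝ), (0 : E4)) := by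
    simp [Phi, hq1, heig', hq₀]
  have hΦ := contDiff_Phi A₀ H
  set ψ : G4 → G4 := hDe.localInverse (Phi A₀ H) e (0, l₀, q₀) with hψdef
  have hψ_cd : ContDiffAt ℝ (⊤ : WithTop ℕ∞) ψ ((0 : ℝ), (1 : ℝ), (0 : E4)) := by
    rw [← hPhi0]
    exact ContDiffAt.to_localInverse hΦ.contDiffAt hDe.hasFDerivAt (by simp)
  set c : ℝ → G4 := fun t => ψ (t, 1, 0) with hcdef
  have hγ : ContDiff ℝ (⊤ : WithTop ℕ∞) (fun t : ℝ => ((t, 1, 0) : G4)) :=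
    contDiff_id.prodMk contDiff_const
  have hc0 : c 0 = ((0 : ℝ), l₀, q₀) := by
    have := hDe.localInverse_apply_image
    rw [hPhi0] at this
    exact this
  have hc_cd : ContDiffAt ℝ (⊤ : WithTop ℕ∞) c 0 := hψ_cd.comp 0 hγ.contDiffAt
  have han : ∀ᶠ t in nhds (0 : ℝ), AnalyticAt ℝ c t :=
    hc_cd.analyticAt.eventually_analyticAt
  have hrinv : ∀ᶠ t in nhds (0 : ℝ), Phi A₀ H (c t) = (t, 1, 0) := by
    have h1 : Filter.Tendsto (fun t : ℝ => ((t, 1, 0) : G4)) (nhds 0)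
        (nhds ((0 : ℝ), (1 : ℝ), (0 : E4))) := hγ.continuous.tendsto 0
    have h2 := hDe.eventually_right_inverse
    rw [hPhi0] at h2
    exact h1.eventually h2
  obtain ⟨ε, hε, hball⟩ := Metric.eventually_nhds_iff.mp (han.and hrinv)
  set l : ℝ → ℝ := fun t => (c t).2.1 with hldef
  set q : ℝ → E4 := fun t => (c t).2.2 with hqdef
  have hmem : ∀ t ∈ Set.Ioo (-ε) ε, AnalyticAt ℝ c t ∧ Phi A₀ H (c t) = (t, 1, 0) := by
    intro t ht
    apply hball
    rw [Real.dist_eq, sub_zero, abs_lt]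
    exact ⟨ht.1, ht.2⟩
  -- derivative of c at 0
  have hψd : HasStrictFDerivAt ψ (e.symm : G4 →L[ℝ] G4) ((0 : ℝ), (1 : ℝ), (0 : E4)) := by
    rw [← hPhi0]; exact hDe.to_localInverse
  have hγd : HasDerivAt (fun t : ℝ => ((t, 1, 0) : G4)) ((1 : ℝ), (0 : ℝ), (0 : E4)) 0 :=
    (hasDerivAt_id (0 : ℝ)).prodMk (hasDerivAt_const (0 : ℝ) _)
  have hcd : HasDerivAt c ((e.symm : G4 →L[ℝ] G4) ((1 : ℝ), (0 : ℝ), (0 : E4))) 0 :=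
    hψd.hasFDerivAt.comp_hasDerivAt 0 hγd
  set d : G4 := (e.symm : G4 →L[ℝ] G4) ((1 : ℝ), (0 : ℝ), (0 : E4)) with hddef
  have hed : D d = ((1 : ℝ), (0 : ℝ), (0 : E4)) := by
    rw [← hcoe]
    exact e.apply_symm_apply _
  rw [hDapp] at hed
  have hd1 : d.1 = 1 := congrArg Prod.fst hed
  have hd2 : 2 * ⟪q₀, d.2.2⟫ = 0 := congrArg (fun p : G4 => p.2.1) hed
  have hd3 : mvCLM A₀ d.2.2 + d.1 • mvCLM H q₀ - (l₀ • d.2.2 + d.2.1 • q₀) = 0 :=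
    congrArg (fun p : G4 => p.2.2) hed
  rw [hd1, one_smul] at hd3
  set w : E4 := d.2.2 with hwdef
  set m : ℝ := d.2.1 with hmdef
  have hw0 : ⟪q₀, w⟫ = 0 := by linarith
  have hd3' : mvCLM A₀ w + mvCLM H q₀ = l₀ • w + m • q₀ := sub_eq_zero.mp hd3
  have hm : m = ⟪q₀, mvCLM H q₀⟫ := by
    have h4 := congrArg (fun v => ⟪q₀, v⟫) hd3'
    simp only [inner_add_right, real_inner_smul_right] at h4
    rw [inner_mvCLM_sym hA₀, heig', real_inner_smul_left, hw0, hq1] at h4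
    linarith
  have hld : HasDerivAt l m 0 :=
    ((ContinuousLinearMap.fst ℝ ℝ E4).comp
      (ContinuousLinearMap.snd ℝ ℝ (ℝ × E4))).hasFDerivAt.comp_hasDerivAt 0 hcd
  have hqd : HasDerivAt q w 0 :=
    ((ContinuousLinearMap.snd ℝ ℝ E4).comp
      (ContinuousLinearMap.snd ℝ ℝ (ℝ × E4))).hasFDerivAt.comp_hasDerivAt 0 hcd
  refine ⟨ε, l, q, hε, ?_, ?_, ?_, ?_, ?_, ?_, w, hqd, ?_, ?_⟩
  · -- ContDiffOn l
    intro t ht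
    exact (((contDiff_fst.comp contDiff_snd).contDiffAt.comp t
      ((hmem t ht).1.contDiffAt)) : ContDiffAt ℝ (⊤ : ℕ∞) l t).contDiffWithinAt
  · intro t ht
    exact (((contDiff_snd.comp contDiff_snd).contDiffAt.comp t
      ((hmem t ht).1.contDiffAt)) : ContDiffAt ℝ (⊤ : ℕ∞) q t).contDiffWithinAt
  · show (c 0).2.1 = l₀
    rw [hc0]
  · show (c 0).2.2 = q₀
    rw [hc0]
  · intro t ht
    have h := (hmem t ht).2
    simp only [Phi, Prod.mk.injEq] at h
    obtain ⟨h1t, h2, h3⟩ := h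
    rw [h1t] at h3
    constructor
    · have h4 : mvCLM A₀ (q t) + t • mvCLM H (q t) = l t • q t := sub_eq_zero.mp h3
      have h5 : (A₀ + t • H).mulVec (q t) = A₀.mulVec (q t) + t • H.mulVec (q t) := by
        rw [Matrix.add_mulVec, Matrix.smul_mulVec]
      have h6 : mvCLM (A₀ + t • H) (q t) = mvCLM A₀ (q t) + t • mvCLM H (q t) := congrArg (WithLp.toLp 2) h5
      exact congrArg WithLp.ofLp (h6.trans h4)
    · have h5 : ⟪q t, q t⟫ = ‖q t‖ * ‖q t‖ := real_inner_self_eq_norm_mul_norm (q t)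
      nlinarith [norm_nonneg (q t)]
  · have hld' : HasDerivAt l ⟪q₀, mvCLM H q₀⟫ 0 := hm ▸ hld
    exact hld'
  · rw [real_inner_comm]; exact hw0
  · show mvCLM (l₀ • (1 : Matrix (Fin 4) (Fin 4) ℝ) - A₀) w
      = mvCLM H q₀ - ⟪q₀, mvCLM H q₀⟫ • q₀
    rw [← hm]
    have hLHS0 : ∀ x : Fin 4 → ℝ, (l₀ • (1 : Matrix (Fin 4) (Fin 4) ℝ) - A₀).mulVec x
        = l₀ • x - A₀ *ᵥ x := fun x => by
      rw [Matrix.sub_mulVec, Matrix.smul_mulVec, Matrix.one_mulVec]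
    have hLHS : mvCLM (l₀ • (1 : Matrix (Fin 4) (Fin 4) ℝ) - A₀) w
        = l₀ • w - mvCLM A₀ w := congrArg (WithLp.toLp 2) (hLHS0 w)
    rw [hLHS, sub_eq_sub_iff_add_eq_add, ← hd3']
    abel
end

section
/- For unit quaternions q, p ∈ ℍ, let C_q and C_p be the ℝ-linear endomorphisms of ℍ given by x ↦ q * x * star q and x ↦ p * x * star p respectively, and let D = C_q - C_p. Then the squared Hilbert–Schmidt (Frobenius) norm of D satisfies LinearMap.trace ℝ ℍ (LinearMap.adjoint D ∘ₗ D) = 8 * (1 - ⟪q, p⟫²), and, setting d = min(‖q - p‖, ‖q + p‖), this equals 2 * d² * (4 - d²). (This is the identity d_chord²(R(q), R(p)) = 2 d_quat²(4 - d_quat²) relating the chordal distance between the rotations represented by q and p to the quaternion distance.) -/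
open scoped Quaternion RealInnerProductSpace

private lemma traceQA' (T : ℍ[ℝ,-1,-1] →ₗ[ℝ] ℍ[ℝ,-1,-1]) :
    LinearMap.trace ℝ ℍ[ℝ,-1,-1] T =
      (T 1).re + (T ⟨0,1,0,0⟩).imI + (T ⟨0,0,1,0⟩).imJ + (T ⟨0,0,0,1⟩).imK := by
  rw [LinearMap.trace_eq_matrix_trace ℝ (QuaternionAlgebra.basisOneIJK (-1) 0 (-1))]
  simp only [Matrix.trace, Fin.sum_univ_four, LinearMap.toMatrix_apply, Matrix.diag,
    QuaternionAlgebra.basisOneIJK, Module.Basis.coe_ofEquivFun, Module.Basis.ofEquivFun_repr_apply,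
    QuaternionAlgebra.coe_linearEquivTuple, QuaternionAlgebra.coe_linearEquivTuple_symm,
    QuaternionAlgebra.equivTuple_apply, QuaternionAlgebra.equivTuple,
    Equiv.coe_fn_symm_mk, Equiv.coe_fn_mk]
  norm_num [Function.update, Fin.ext_iff, Pi.single_apply, show ((3:Fin 4):ℕ) = 3 from rfl]
  rfl

private lemma traceQ' (T : ℍ[ℝ] →ₗ[ℝ] ℍ[ℝ]) :
    LinearMap.trace ℝ ℍ[ℝ] T =
      (T 1).re + (T ⟨0,1,0,0⟩).imI + (T ⟨0,0,1,0⟩).imJ + (T ⟨0,0,0,1⟩).imK :=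
  traceQA' T

private lemma re_eq_inner (x : ℍ[ℝ]) : x.re = ⟪x, (1 : ℍ[ℝ])⟫ := by
  simp [Quaternion.inner_def]

private lemma imI_eq_inner (x : ℍ[ℝ]) : x.imI = ⟪x, (⟨0,1,0,0⟩ : ℍ[ℝ])⟫ := by
  erw [Quaternion.inner_def, Quaternion.re_mul]
  erw [Quaternion.re_star, Quaternion.imI_star, Quaternion.imJ_star, Quaternion.imK_star]
  simp

private lemma imJ_eq_inner (x : ℍ[ℝ]) : x.imJ = ⟪x, (⟨0,0,1,0⟩ : ℍ[ℝ])⟫ := by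
  erw [Quaternion.inner_def, Quaternion.re_mul]
  erw [Quaternion.re_star, Quaternion.imI_star, Quaternion.imJ_star, Quaternion.imK_star]
  simp

private lemma imK_eq_inner (x : ℍ[ℝ]) : x.imK = ⟪x, (⟨0,0,0,1⟩ : ℍ[ℝ])⟫ := by
  erw [Quaternion.inner_def, Quaternion.re_mul]
  erw [Quaternion.re_star, Quaternion.imI_star, Quaternion.imJ_star, Quaternion.imK_star]
  simp

set_option maxRecDepth 10000 in
/-- The identity `d_chord²(R(q), R(p)) = 8(1 - ⟪q,p⟫²) = 2 d_quat²(4 - d_quat²)`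
relating the chordal (Frobenius) distance between the rotations represented by
unit quaternions `q` and `p` to the quaternion distance. -/
theorem chordal_distance_eq_quat_distance (q p : ℍ[ℝ]) (hq : ‖q‖ = 1) (hp : ‖p‖ = 1)
    (Cq Cp : ℍ[ℝ] →ₗ[ℝ] ℍ[ℝ])
    (hCq : ∀ x, Cq x = q * x * star q) (hCp : ∀ x, Cp x = p * x * star p) :
    LinearMap.trace ℝ ℍ[ℝ] (LinearMap.adjoint (Cq - Cp) ∘ₗ (Cq - Cp)) =
      8 * (1 - ⟪q, p⟫ ^ 2) ∧
    LinearMap.trace ℝ ℍ[ℝ] (LinearMap.adjoint (Cq - Cp) ∘ₗ (Cq - Cp)) =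
      2 * (min ‖q - p‖ ‖q + p‖) ^ 2 * (4 - (min ‖q - p‖ ‖q + p‖) ^ 2) := by
  have hq' : q.re ^ 2 + q.imI ^ 2 + q.imJ ^ 2 + q.imK ^ 2 = 1 := by
    rw [← Quaternion.normSq_def', Quaternion.normSq_eq_norm_mul_self, hq]; ring
  have hp' : p.re ^ 2 + p.imI ^ 2 + p.imJ ^ 2 + p.imK ^ 2 = 1 := by
    rw [← Quaternion.normSq_def', Quaternion.normSq_eq_norm_mul_self, hp]; ring
  set D := Cq - Cp with hDdef
  have hD : ∀ x, D x = q * x * star q - p * x * star p := by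
    intro x; simp [hDdef, LinearMap.sub_apply, hCq, hCp]
  have h1 : LinearMap.trace ℝ ℍ[ℝ] (LinearMap.adjoint D ∘ₗ D) =
      ⟪D 1, D 1⟫ + ⟪D ⟨0,1,0,0⟩, D ⟨0,1,0,0⟩⟫ + ⟪D ⟨0,0,1,0⟩, D ⟨0,0,1,0⟩⟫ +
        ⟪D ⟨0,0,0,1⟩, D ⟨0,0,0,1⟩⟫ := by
    rw [traceQ']
    simp only [LinearMap.comp_apply]
    rw [re_eq_inner, imI_eq_inner, imJ_eq_inner, imK_eq_inner,
      LinearMap.adjoint_inner_left]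
    erw [LinearMap.comp_apply, LinearMap.adjoint_inner_left, LinearMap.comp_apply,
      LinearMap.adjoint_inner_left, LinearMap.comp_apply, LinearMap.adjoint_inner_left]
  have main : LinearMap.trace ℝ ℍ[ℝ] (LinearMap.adjoint D ∘ₗ D) = 8 * (1 - ⟪q, p⟫ ^ 2) := by
    rw [h1]
    set e1 : ℍ[ℝ] := ⟨0,1,0,0⟩ with he1
    set e2 : ℍ[ℝ] := ⟨0,0,1,0⟩ with he2
    set e3 : ℍ[ℝ] := ⟨0,0,0,1⟩ with he3
    simp only [hD, Quaternion.inner_def, Quaternion.re_mul, Quaternion.imI_mul,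
      Quaternion.imJ_mul, Quaternion.imK_mul, Quaternion.re_star, Quaternion.imI_star,
      Quaternion.imJ_star, Quaternion.imK_star, Quaternion.re_sub, Quaternion.imI_sub,
      Quaternion.imJ_sub, Quaternion.imK_sub, Quaternion.re_one, Quaternion.imI_one,
      Quaternion.imJ_one, Quaternion.imK_one]
    simp only [he1, he2, he3]
    linear_combination
      (4 * ((q.re ^ 2 + q.imI ^ 2 + q.imJ ^ 2 + q.imK ^ 2) + 1)) * hq' +
      (4 * ((p.re ^ 2 + p.imI ^ 2 + p.imJ ^ 2 + p.imK ^ 2) + 1)) * hp'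
  refine ⟨main, ?_⟩
  have hmin : (min ‖q - p‖ ‖q + p‖) ^ 2 = 2 - 2 * ⟪q, p⟫ ∨
      (min ‖q - p‖ ‖q + p‖) ^ 2 = 2 + 2 * ⟪q, p⟫ := by
    rcases min_cases ‖q - p‖ ‖q + p‖ with h | h
    · left; rw [h.1, norm_sub_sq_real, hq, hp]; ring
    · right; rw [h.1, norm_add_sq_real, hq, hp]; ring
  rcases hmin with h | h <;> rw [main, h] <;> ring
end

section
/- Let N : ℕ and let q₁, …, q_N ∈ ℍ be unit quaternions. Define the inertia operator M : ℍ →ₗ[ℝ] ℍ by M x = ∑ i, ⟪x, qᵢ⟫ • qᵢ, and for a unit quaternion p define S(p) = ∑ i, LinearMap.trace ℝ ℍ (LinearMap.adjoint (C_p - C_{qᵢ}) ∘ₗ (C_p - C_{qᵢ})) (the sum of squared chordal distances to the rotations represented by the qᵢ). Then a unit quaternion q minimizes S over all unit quaternions if and only if M q = μ • q, where μ is the supremum of ⟪x, M x⟫ over unit x ∈ ℍ. That is, the chordal rotation average is given by a unit eigenvector of the inertia matrix ∑ᵢ qᵢqᵢᵀ corresponding to its maximal eigenvalue. -/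
open scoped Quaternion RealInnerProductSpace

noncomputable def quatBasis : Module.Basis (Fin 4) ℝ ℍ[ℝ] := QuaternionAlgebra.basisOneIJK (-1) 0 (-1)

lemma quatBasis_apply (i : Fin 4) :
    quatBasis i = (QuaternionAlgebra.equivTuple (-1 : ℝ) 0 (-1)).symm (Pi.single i 1) := by
  have := congrFun (Module.Basis.coe_ofEquivFun (QuaternionAlgebra.linearEquivTuple (-1 : ℝ) 0 (-1))) i
  exact this

noncomputable def mulLR (a b : ℍ[ℝ]) : ℍ[ℝ] →ₗ[ℝ] ℍ[ℝ] :=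
  (LinearMap.mulRight ℝ b).comp (LinearMap.mulLeft ℝ a)

lemma mulLR_apply (a b x : ℍ[ℝ]) : mulLR a b x = a * x * b := rfl

lemma trace_mulLR (a b : ℍ[ℝ]) :
    LinearMap.trace ℝ ℍ[ℝ] (mulLR a b) = 4 * a.re * b.re := by
  rw [LinearMap.trace_eq_matrix_trace ℝ quatBasis, Matrix.trace]
  have h : ∀ x : ℍ[ℝ], ⇑(quatBasis.repr x) = ![x.re, x.imI, x.imJ, x.imK] := fun x =>
    QuaternionAlgebra.coe_basisOneIJK_repr (-1) 0 (-1) x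
  have hc : ∀ i, (quatBasis i).re = Pi.single (M := fun _ => ℝ) i 1 0 ∧
      (quatBasis i).imI = Pi.single (M := fun _ => ℝ) i 1 1 ∧
      (quatBasis i).imJ = Pi.single (M := fun _ => ℝ) i 1 2 ∧
      (quatBasis i).imK = Pi.single (M := fun _ => ℝ) i 1 3 := fun i => by
    rw [quatBasis_apply]; exact ⟨rfl, rfl, rfl, rfl⟩
  simp only [Matrix.diag, LinearMap.toMatrix_apply, Fin.sum_univ_four, mulLR_apply, h,
    Quaternion.re_mul, Quaternion.imI_mul, Quaternion.imJ_mul, Quaternion.imK_mul, hc]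
  simp
  ring

lemma re_mul_comm (a b : ℍ[ℝ]) : (a * b).re = (b * a).re := by
  simp only [Quaternion.re_mul]; ring

lemma mulLR_comp (a b c d : ℍ[ℝ]) : mulLR a b ∘ₗ mulLR c d = mulLR (a * c) (d * b) :=
  LinearMap.ext fun x => by simp only [LinearMap.comp_apply, mulLR_apply, mul_assoc]

lemma adjoint_mulLR (a b : ℍ[ℝ]) :
    LinearMap.adjoint (mulLR a b) = mulLR (star a) (star b) := by
  symm
  rw [LinearMap.eq_adjoint_iff]
  intro x y
  simp only [mulLR_apply, Quaternion.inner_def, star_mul]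
  simp only [mul_assoc]
  rw [re_mul_comm (star a)]
  simp only [mul_assoc]

lemma star_mul_self_unit {p : ℍ[ℝ]} (hp : ‖p‖ = 1) : star p * p = 1 := by
  rw [Quaternion.star_mul_self, Quaternion.normSq_eq_norm_mul_self, hp]
  norm_num

open Finset in
/-- The chordal rotation average (Section V of the paper): a unit quaternion
minimizes the sum of squared chordal distances to the rotations represented by
unit quaternions `q i` if and only if it is a unit eigenvector of the inertia
operator `M x = ∑ i ⟪x, qᵢ⟫ qᵢ` for its maximal eigenvalue
`μ = sup {⟪x, M x⟫ : ‖x‖ = 1}`. -/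
theorem chordal_rotation_average (N : ℕ) (q : Fin N → ℍ[ℝ]) (hq : ∀ i, ‖q i‖ = 1)
    (C : ℍ[ℝ] → (ℍ[ℝ] →ₗ[ℝ] ℍ[ℝ])) (hC : ∀ p x, C p x = p * x * star p)
    (M : ℍ[ℝ] →ₗ[ℝ] ℍ[ℝ]) (hM : ∀ x, M x = ∑ i, ⟪x, q i⟫ • q i)
    (S : ℍ[ℝ] → ℝ)
    (hS : ∀ p, S p = ∑ i, LinearMap.trace ℝ ℍ[ℝ]
      (LinearMap.adjoint (C p - C (q i)) ∘ₗ (C p - C (q i))))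
    (μ : ℝ) (hμ : μ = sSup {t : ℝ | ∃ x : ℍ[ℝ], ‖x‖ = 1 ∧ t = ⟪x, M x⟫}) :
    ∀ r : ℍ[ℝ], ‖r‖ = 1 →
      ((∀ p : ℍ[ℝ], ‖p‖ = 1 → S r ≤ S p) ↔ M r = μ • r) := by
  -- C is the two-sided multiplication operator
  have hCm : ∀ p, C p = mulLR p (star p) := fun p =>
    LinearMap.ext fun x => by rw [hC, mulLR_apply]
  -- inner product of two unit quaternions as real parts
  have hre : ∀ a b : ℍ[ℝ], (star a * b).re = ⟪a, b⟫ := by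
    intro a b
    simp only [Quaternion.inner_def, Quaternion.re_mul, Quaternion.re_star,
      Quaternion.imI_star, Quaternion.imJ_star, Quaternion.imK_star]
    ring
  -- the trace of each summand
  have hterm : ∀ p : ℍ[ℝ], ‖p‖ = 1 → ∀ i, LinearMap.trace ℝ ℍ[ℝ]
      (LinearMap.adjoint (C p - C (q i)) ∘ₗ (C p - C (q i))) = 8 - 8 * ⟪p, q i⟫ ^ 2 := by
    intro p hp i
    rw [hCm, hCm, map_sub, adjoint_mulLR, adjoint_mulLR, star_star, star_star]
    rw [LinearMap.sub_comp, LinearMap.comp_sub, LinearMap.comp_sub,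
      mulLR_comp, mulLR_comp, mulLR_comp, mulLR_comp]
    rw [map_sub, map_sub, map_sub, trace_mulLR, trace_mulLR, trace_mulLR, trace_mulLR]
    rw [star_mul_self_unit hp, star_mul_self_unit (hq i)]
    have h1 : (star p * q i).re = ⟪p, q i⟫ := hre _ _
    have h2 : (star (q i) * p).re = ⟪q i, p⟫ := hre _ _
    rw [h1, h2, real_inner_comm (q i) p]
    simp [Quaternion.re_one]
    ring
  -- quadratic form identity
  have hquad : ∀ p : ℍ[ℝ], ⟪p, M p⟫ = ∑ i, ⟪p, q i⟫ ^ 2 := by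
    intro p
    rw [hM, inner_sum]
    refine Finset.sum_congr rfl fun i _ => ?_
    rw [real_inner_smul_right]; ring
  -- formula for S on the unit sphere
  have hSf : ∀ p : ℍ[ℝ], ‖p‖ = 1 → S p = 8 * N - 8 * ⟪p, M p⟫ := by
    intro p hp
    rw [hS, hquad, Finset.sum_congr rfl fun i _ => hterm p hp i]
    rw [Finset.sum_sub_distrib, Finset.sum_const, ← Finset.mul_sum]
    simp [Finset.card_univ]
    ring
  -- the constraint set as a compact image
  have hset : {t : ℝ | ∃ x : ℍ[ℝ], ‖x‖ = 1 ∧ t = ⟪x, M x⟫}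
      = (fun x : ℍ[ℝ] => ⟪x, M x⟫) '' Metric.sphere 0 1 := by
    ext t
    simp only [Set.mem_setOf_eq, Set.mem_image, Metric.mem_sphere, dist_zero_right]
    exact ⟨fun ⟨x, h1, h2⟩ => ⟨x, h1, h2.symm⟩, fun ⟨x, h1, h2⟩ => ⟨x, h1, h2.symm⟩⟩
  have hMc : Continuous fun x : ℍ[ℝ] => ⟪x, M x⟫ :=
    Continuous.inner continuous_id (M.continuous_of_finiteDimensional.comp continuous_id)
  have hcomp : IsCompact ((fun x : ℍ[ℝ] => ⟪x, M x⟫) '' Metric.sphere 0 1) :=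
    (isCompact_sphere (0 : ℍ[ℝ]) 1).image hMc
  have hne : ((fun x : ℍ[ℝ] => ⟪x, M x⟫) '' Metric.sphere 0 1).Nonempty := by
    refine ⟨⟪(1 : ℍ[ℝ]), M 1⟫, 1, ?_, rfl⟩
    simp
  have hub : ∀ x : ℍ[ℝ], ‖x‖ = 1 → ⟪x, M x⟫ ≤ μ := by
    intro x hx
    rw [hμ, hset]
    exact le_csSup hcomp.bddAbove ⟨x, by simpa using hx, rfl⟩
  have hmem : ∃ x0 : ℍ[ℝ], ‖x0‖ = 1 ∧ ⟪x0, M x0⟫ = μ := by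
    have := hcomp.sSup_mem hne
    rw [← hset, ← hμ] at this
    obtain ⟨x0, h1, h2⟩ := this
    exact ⟨x0, h1, h2.symm⟩
  intro r hr
  have hinner_r : ⟪r, r⟫ = 1 := by
    rw [real_inner_self_eq_norm_sq, hr]; norm_num
  constructor
  · intro hmin
    -- r maximizes the quadratic form
    have hmax : ∀ x : ℍ[ℝ], ‖x‖ = 1 → ⟪x, M x⟫ ≤ ⟪r, M r⟫ := by
      intro x hx
      have := hmin x hx
      rw [hSf r hr, hSf x hx] at this
      linarith
    have hrμ : ⟪r, M r⟫ = μ := by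
      obtain ⟨x0, hx0, hx0e⟩ := hmem
      exact le_antisymm (hub r hr) (hx0e ▸ hmax x0 hx0)
    -- Rayleigh quotient argument
    set T : ℍ[ℝ] →L[ℝ] ℍ[ℝ] := LinearMap.toContinuousLinearMap M with hT
    have hTapp : ∀ x, T x = M x := fun x => rfl
    have hsym : (M : ℍ[ℝ] →ₗ[ℝ] ℍ[ℝ]).IsSymmetric := by
      intro x y
      simp only [hM, sum_inner, inner_sum, real_inner_smul_left, real_inner_smul_right]
      refine Finset.sum_congr rfl fun i _ => ?_
      rw [real_inner_comm (q i) y]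
      ring
    have hsa : IsSelfAdjoint T := by
      rw [ContinuousLinearMap.isSelfAdjoint_iff_isSymmetric]
      exact hsym
    have hreapp : ∀ x : ℍ[ℝ], T.reApplyInnerSelf x = ⟪x, M x⟫ := by
      intro x
      rw [ContinuousLinearMap.reApplyInnerSelf_apply]
      simp only [hTapp]
      rw [real_inner_comm]
      rfl
    have hmaxon : IsMaxOn T.reApplyInnerSelf (Metric.sphere (0 : ℍ[ℝ]) ‖r‖) r := by
      intro x hx
      have hx1 : ‖x‖ = 1 := by simpa [hr] using hx
      simp only [Set.mem_setOf_eq, hreapp]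
      exact hmax x hx1
    have heq := hsa.eq_smul_self_of_isLocalExtrOn (x₀ := r) (Or.inr hmaxon.localize)
    rw [ContinuousLinearMap.rayleighQuotient, hreapp, hrμ, hr] at heq
    simpa [hTapp] using heq
  · intro heig p hp
    have hrμ : ⟪r, M r⟫ = μ := by
      rw [heig, real_inner_smul_right, hinner_r]; ring
    rw [hSf r hr, hSf p hp, hrμ]
    have := hub p hp
    linarith
end

section
/- Let N : ℕ, let q : Fin N → ℍ, and suppose s = ∑ i, q i is nonzero. Then for every unit quaternion p (‖p‖ = 1): ∑ i, ‖(‖s‖⁻¹ • s) - q i‖² ≤ ∑ i, ‖p - q i‖², with equality if and only if p = ‖s‖⁻¹ • s. That is, the normalized sum s/‖s‖ is the unique minimizer over the unit sphere of the sum of squared quaternion distances ∑ᵢ ‖p - qᵢ‖². -/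
open scoped Quaternion RealInnerProductSpace

open Finset in
/-- Quaternion normalization computes the mean (Section V of the paper, footnote):
if `s = ∑ i, q i ≠ 0`, then `s / ‖s‖` is the unique minimizer over the unit sphere
of the sum of squared quaternion distances `∑ i, ‖p - q i‖²`. -/
theorem normalized_sum_minimizes_quat_distance (N : ℕ) (q : Fin N → ℍ[ℝ])
    (s : ℍ[ℝ]) (hs : s = ∑ i, q i) (hne : s ≠ 0) :
    ∀ p : ℍ[ℝ], ‖p‖ = 1 →
      ∑ i, ‖(‖s‖⁻¹ • s) - q i‖ ^ 2 ≤ ∑ i, ‖p - q i‖ ^ 2 ∧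
      (∑ i, ‖(‖s‖⁻¹ • s) - q i‖ ^ 2 = ∑ i, ‖p - q i‖ ^ 2 ↔ p = ‖s‖⁻¹ • s) := by
  intro p hp
  set u : ℍ[ℝ] := ‖s‖⁻¹ • s with hu
  have hns : ‖s‖ ≠ 0 := norm_ne_zero_iff.mpr hne
  have hun : ‖u‖ = 1 := by
    rw [hu, norm_smul, norm_inv, norm_norm, inv_mul_cancel₀ hns]
  have expand : ∀ x : ℍ[ℝ], ‖x‖ = 1 →
      ∑ i, ‖x - q i‖ ^ 2 = (N : ℝ) + ∑ i, ‖q i‖ ^ 2 - 2 * ⟪x, s⟫ := by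
    intro x hx
    have h1 : ∀ i : Fin N, ‖x - q i‖ ^ 2 = 1 - 2 * ⟪x, q i⟫ + ‖q i‖ ^ 2 := by
      intro i
      rw [norm_sub_sq_real, hx]; ring
    simp_rw [h1]
    rw [Finset.sum_add_distrib, Finset.sum_sub_distrib, ← Finset.mul_sum,
        ← inner_sum, ← hs]
    simp
    ring
  have hus : ⟪u, s⟫ = ‖s‖ := by
    rw [hu, real_inner_smul_left, real_inner_self_eq_norm_sq]
    field_simp
  have hps : ⟪p, s⟫ ≤ ‖s‖ := by
    calc ⟪p, s⟫ ≤ ‖p‖ * ‖s‖ := real_inner_le_norm p s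
    _ = ‖s‖ := by rw [hp, one_mul]
  rw [expand u hun, expand p hp, hus]
  refine ⟨by linarith, ?_, ?_⟩
  · intro h
    have heq : ⟪p, s⟫ = ‖p‖ * ‖s‖ := by rw [hp, one_mul]; linarith
    have h2 := (inner_eq_norm_mul_iff_real).mp heq
    rw [hp, one_smul] at h2
    calc p = ‖s‖⁻¹ • (‖s‖ • p) := by rw [smul_smul, inv_mul_cancel₀ hns, one_smul]
    _ = ‖s‖⁻¹ • s := by rw [h2]
  · intro h; rw [h, hus]
end

section
/- For unit quaternions q, p ∈ ℍ, one has (∀ x : ℍ, q * x * star q = p * x * star p) if and only if p = q or p = -q. That is, two unit quaternions induce the same conjugation (rotation) map on ℍ exactly when they are equal or antipodal, so the map from unit quaternions to rotations is two-to-one and identifies antipodal points. -/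
open scoped Quaternion

/-- Two unit quaternions induce the same conjugation (rotation) map on `ℍ` exactly
when they are equal or antipodal: the map from unit quaternions to rotations is
two-to-one and identifies antipodal points. -/
theorem conjugation_eq_iff_antipodal (q p : ℍ[ℝ]) (hq : ‖q‖ = 1) (hp : ‖p‖ = 1) :
    (∀ x : ℍ[ℝ], q * x * star q = p * x * star p) ↔ (p = q ∨ p = -q) := by
  have hq2 : star q * q = 1 := by
    rw [Quaternion.star_mul_self, Quaternion.normSq_eq_norm_mul_self, hq]; norm_num
  have hp2 : star p * p = 1 := by
    rw [Quaternion.star_mul_self, Quaternion.normSq_eq_norm_mul_self, hp]; norm_num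
  have hq2' : q * star q = 1 := by
    rw [Quaternion.self_mul_star, Quaternion.normSq_eq_norm_mul_self, hq]; norm_num
  have hp2' : p * star p = 1 := by
    rw [Quaternion.self_mul_star, Quaternion.normSq_eq_norm_mul_self, hp]; norm_num
  constructor
  · intro h
    set r := star p * q with hr
    have hcomm : ∀ x : ℍ[ℝ], r * x = x * r := by
      intro x
      have h1 : star p * (q * x * star q) * p = star p * (p * x * star p) * p := by rw [h]
      have h2 : star p * q * x * (star q * p) = x := by
        calc star p * q * x * (star q * p)
            = star p * (q * x * star q) * p := by noncomm_ring
          _ = star p * (p * x * star p) * p := h1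
          _ = (star p * p) * x * (star p * p) := by noncomm_ring
          _ = x := by rw [hp2]; noncomm_ring
      have h3 : star r * r = 1 := by
        rw [hr, star_mul, star_star]
        calc star q * p * (star p * q) = star q * (p * star p * q) := by noncomm_ring
          _ = 1 := by rw [hp2', one_mul]; exact hq2
      calc r * x = r * x * (star r * r) := by rw [h3]; noncomm_ring
        _ = (star p * q * x * (star q * p)) * r := by
            rw [hr, star_mul, star_star]; noncomm_ring
        _ = x * r := by rw [h2]
    -- r is central, hence real
    have hb : r.imI = 0 ∧ r.imJ = 0 ∧ r.imK = 0 := by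
      obtain ⟨e1, he1⟩ : ∃ e : ℍ[ℝ], e.re = 0 ∧ e.imI = 1 ∧ e.imJ = 0 ∧ e.imK = 0 :=
        ⟨⟨0, 1, 0, 0⟩, rfl, rfl, rfl, rfl⟩
      obtain ⟨e2, he2⟩ : ∃ e : ℍ[ℝ], e.re = 0 ∧ e.imI = 0 ∧ e.imJ = 1 ∧ e.imK = 0 :=
        ⟨⟨0, 0, 1, 0⟩, rfl, rfl, rfl, rfl⟩
      have h1 := hcomm e1
      have h2 := hcomm e2
      rw [Quaternion.ext_iff] at h1 h2
      simp [Quaternion.re_mul, Quaternion.imI_mul, Quaternion.imJ_mul,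
        Quaternion.imK_mul, he1, he2] at h1 h2
      obtain ⟨ha1, ha2⟩ := h1
      obtain ⟨hb1, hb2⟩ := h2
      refine ⟨by linarith, by linarith, by linarith⟩
    obtain ⟨h1, h2, h3⟩ := hb
    have hnr : Quaternion.normSq r = 1 := by
      rw [hr]
      simp [Quaternion.normSq.map_mul, Quaternion.normSq_star,
        Quaternion.normSq_eq_norm_mul_self, hp, hq]
    have hre : r.re = 1 ∨ r.re = -1 := by
      rw [Quaternion.normSq_def', h1, h2, h3] at hnr
      exact mul_self_eq_one_iff.mp (by nlinarith)
    have hrval : r = 1 ∨ r = -1 := by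
      rcases hre with h | h
      · left; ext <;> simp [h, h1, h2, h3]
      · right; ext <;> simp [h, h1, h2, h3]
    have key : p * r = q := by rw [hr, ← mul_assoc, hp2', one_mul]
    rcases hrval with h | h
    · left; rw [h, mul_one] at key; exact key
    · right; rw [h] at key; rw [← key]; noncomm_ring
  · rintro (rfl | rfl) x
    · rfl
    · simp [mul_assoc]
end
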